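/- arXiv:2501.13408 — 6 statements merged into one kernel-verified Lean document; each statement's English description precedes it below -/
import Mathlib

section
/- Let (T, Γ) be a Γ-semigroup with zero 0 and T ≠ {0}. Then T is 0-simple if and only if TΓeΓT = T for every nonzero e ∈ T. -/
/-- The set product AΓB = {aγb : a ∈ A, γ ∈ Γ, b ∈ B} for a Γ-semigroup
with multiplication `mul : T → G → T → T`. -/
def gprod {T G : Type*} (mul : T → G → T → T) (A B : Set T) : Set T :=
  {x | ∃ a ∈ A, ∃ γ : G, ∃ b ∈ B, x = mul a γ b}

/-- A nonempty subset B with TΓB ⊆ B. -/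
def IsLeftIdeal {T G : Type*} (mul : T → G → T → T) (B : Set T) : Prop :=
  B.Nonempty ∧ gprod mul Set.univ B ⊆ B

/-- A nonempty subset B with BΓT ⊆ B. -/
def IsRightIdeal {T G : Type*} (mul : T → G → T → T) (B : Set T) : Prop :=
  B.Nonempty ∧ gprod mul B Set.univ ⊆ B

/-- A Γ-two-sided ideal. -/
def IsTwoSidedIdeal {T G : Type*} (mul : T → G → T → T) (B : Set T) : Prop :=
  IsLeftIdeal mul B ∧ IsRightIdeal mul B

/-- z is a zero element: eαz = zαe = z for all e, α. -/
def IsZero {T G : Type*} (mul : T → G → T → T) (z : T) : Prop :=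
  ∀ (e : T) (α : G), mul e α z = z ∧ mul z α e = z

/-- A least Γ-left ideal: every Γ-left ideal contained in it equals it. -/
def IsLeastLeftIdeal {T G : Type*} (mul : T → G → T → T) (H : Set T) : Prop :=
  IsLeftIdeal mul H ∧ ∀ B : Set T, IsLeftIdeal mul B → B ⊆ H → B = H

/-- A least Γ-two-sided ideal. -/
def IsLeastTwoSidedIdeal {T G : Type*} (mul : T → G → T → T) (A : Set T) : Prop :=
  IsTwoSidedIdeal mul A ∧ ∀ B : Set T, IsTwoSidedIdeal mul B → B ⊆ A → B = A

/-- A 0-least Γ-left ideal. -/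
def IsZeroLeastLeftIdeal {T G : Type*} (mul : T → G → T → T) (z : T) (H : Set T) : Prop :=
  IsLeftIdeal mul H ∧ H ≠ {z} ∧
    ∀ B : Set T, IsLeftIdeal mul B → B ⊆ H → B = {z} ∨ B = H

/-- A 0-least Γ-right ideal. -/
def IsZeroLeastRightIdeal {T G : Type*} (mul : T → G → T → T) (z : T) (H : Set T) : Prop :=
  IsRightIdeal mul H ∧ H ≠ {z} ∧
    ∀ B : Set T, IsRightIdeal mul B → B ⊆ H → B = {z} ∨ B = H

/-- A 0-least Γ-two-sided ideal. -/
def IsZeroLeastTwoSidedIdeal {T G : Type*} (mul : T → G → T → T) (z : T) (H : Set T) : Prop :=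
  IsTwoSidedIdeal mul H ∧ H ≠ {z} ∧
    ∀ B : Set T, IsTwoSidedIdeal mul B → B ⊆ H → B = {z} ∨ B = H

/-- 0-simple: TΓT ≠ {0} and the only Γ-two-sided ideals are {0} and T. -/
def IsZeroSimple {T G : Type*} (mul : T → G → T → T) (z : T) : Prop :=
  gprod mul Set.univ Set.univ ≠ {z} ∧
    ∀ B : Set T, IsTwoSidedIdeal mul B → B = {z} ∨ B = Set.univ

/-- e is an idempotent: eαe = e for some α. -/
def IsIdempotent {T G : Type*} (mul : T → G → T → T) (e : T) : Prop :=
  ∃ α : G, mul e α e = e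

/-- The partial order on idempotents: e ≤ f iff exf = fye = e for some x, y ∈ Γ. -/
def IdemLe {T G : Type*} (mul : T → G → T → T) (e f : T) : Prop :=
  ∃ x y : G, mul e x f = e ∧ mul f y e = e

/-- A primitive idempotent: nonzero, and minimal among nonzero idempotents. -/
def IsPrimitiveIdempotent {T G : Type*} (mul : T → G → T → T) (z e : T) : Prop :=
  e ≠ z ∧ IsIdempotent mul e ∧
    ∀ f : T, f ≠ z → IsIdempotent mul f → IdemLe mul f e → f = e

/-- Completely 0-simple: 0-simple with a primitive idempotent. -/
def IsCompletelyZeroSimple {T G : Type*} (mul : T → G → T → T) (z : T) : Prop :=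
  IsZeroSimple mul z ∧ ∃ e : T, IsPrimitiveIdempotent mul z e

/-- Green's relation L: e L f iff {e} ∪ TΓe = {f} ∪ TΓf. -/
def LRel {T G : Type*} (mul : T → G → T → T) (e f : T) : Prop :=
  insert e (gprod mul Set.univ {e}) = insert f (gprod mul Set.univ {f})

/-- Green's relation R: e R f iff {e} ∪ eΓT = {f} ∪ fΓT. -/
def RRel {T G : Type*} (mul : T → G → T → T) (e f : T) : Prop :=
  insert e (gprod mul {e} Set.univ) = insert f (gprod mul {f} Set.univ)

/-- Green's relation D = L ∘ R. -/
def DRel {T G : Type*} (mul : T → G → T → T) (e f : T) : Prop :=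
  ∃ c : T, LRel mul e c ∧ RRel mul c f

/-- The Γ-two-sided ideal generated by e: {e} ∪ TΓe ∪ eΓT ∪ TΓeΓT. -/
def GenTwo {T G : Type*} (mul : T → G → T → T) (e : T) : Set T :=
  {e} ∪ gprod mul Set.univ {e} ∪ gprod mul {e} Set.univ ∪
    gprod mul (gprod mul Set.univ {e}) Set.univ

/-- A Γ-prime ideal. -/
def IsPrimeIdeal {T G : Type*} (mul : T → G → T → T) (Q : Set T) : Prop :=
  IsTwoSidedIdeal mul Q ∧
    ∀ E F : Set T, IsTwoSidedIdeal mul E → IsTwoSidedIdeal mul F →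
      gprod mul E F ⊆ Q → E ⊆ Q ∨ F ⊆ Q

/-- A Γ-two-sided ideal of the Γ-semigroup H (a subset of T closed as an ideal of H). -/
def IsTwoSidedIdealIn {T G : Type*} (mul : T → G → T → T) (H B : Set T) : Prop :=
  B.Nonempty ∧ B ⊆ H ∧ gprod mul H B ⊆ B ∧ gprod mul B H ⊆ B


/-! Both directions rest on TΓeΓT being a two-sided ideal contained in every ideal that
contains e. If T is 0-simple, TΓeΓT = {0} is impossible for e ≠ 0: the elements x with
TΓxΓT ⊆ {0} would then form a nonzero ideal, hence all of T, and since 0-simplicity forces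
T = TΓT = TΓTΓT, every element would be 0. -/

open Set

section GammaSemigroup

variable {T G : Type*} (mul : T → G → T → T)

theorem mul_mem_gprod {A B : Set T} {a b : T} (ha : a ∈ A) (γ : G) (hb : b ∈ B) :
    mul a γ b ∈ gprod mul A B :=
  ⟨a, ha, γ, b, hb, rfl⟩

theorem gprod_mono {A A' B B' : Set T} (hA : A ⊆ A') (hB : B ⊆ B') :
    gprod mul A B ⊆ gprod mul A' B' := by
  rintro _ ⟨a, ha, γ, b, hb, rfl⟩
  exact mul_mem_gprod mul (hA ha) γ (hB hb)

theorem isLeftIdeal_univ [Nonempty T] : IsLeftIdeal mul (univ : Set T) :=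
  ⟨univ_nonempty, subset_univ _⟩

variable {mul}

theorem isLeftIdeal_gprod_univ_singleton [Nonempty G]
    (assoc : ∀ (e f g : T) (α β : G), mul (mul e α f) β g = mul e α (mul f β g)) (e : T) :
    IsLeftIdeal mul (gprod mul univ {e}) := by
  obtain ⟨γ⟩ := ‹Nonempty G›
  refine ⟨⟨_, mul_mem_gprod mul (mem_univ e) γ (mem_singleton _)⟩, ?_⟩
  rintro _ ⟨t, -, α, _, ⟨s, -, β, _, rfl, rfl⟩, rfl⟩
  rw [← assoc]
  exact mul_mem_gprod mul (mem_univ _) β (mem_singleton _)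

theorem IsLeftIdeal.isTwoSidedIdeal_gprod_univ [Nonempty G]
    (assoc : ∀ (e f g : T) (α β : G), mul (mul e α f) β g = mul e α (mul f β g))
    {A : Set T} (hA : IsLeftIdeal mul A) : IsTwoSidedIdeal mul (gprod mul A univ) := by
  obtain ⟨γ⟩ := ‹Nonempty G›
  obtain ⟨a, ha⟩ := hA.1
  have hne : (gprod mul A univ).Nonempty := ⟨_, mul_mem_gprod mul ha γ (mem_univ a)⟩
  refine ⟨⟨hne, ?_⟩, ⟨hne, ?_⟩⟩
  · rintro _ ⟨t, -, α, _, ⟨b, hb, β, s, -, rfl⟩, rfl⟩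
    rw [← assoc]
    exact mul_mem_gprod mul (hA.2 (mul_mem_gprod mul (mem_univ t) α hb)) β (mem_univ s)
  · rintro _ ⟨_, ⟨b, hb, β, s, -, rfl⟩, α, t, -, rfl⟩
    rw [assoc]
    exact mul_mem_gprod mul hb β (mem_univ _)

theorem gprod_gprod_mul_left_subset
    (assoc : ∀ (e f g : T) (α β : G), mul (mul e α f) β g = mul e α (mul f β g))
    (t : T) (α : G) (x : T) :
    gprod mul (gprod mul univ {mul t α x}) univ ⊆ gprod mul (gprod mul univ {x}) univ := by
  rintro _ ⟨_, ⟨c, -, δ, _, rfl, rfl⟩, β, b, -, rfl⟩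
  rw [← assoc]
  exact mul_mem_gprod mul (mul_mem_gprod mul (mem_univ _) α (mem_singleton _)) β (mem_univ b)

theorem gprod_gprod_mul_right_subset
    (assoc : ∀ (e f g : T) (α β : G), mul (mul e α f) β g = mul e α (mul f β g))
    (x : T) (α : G) (s : T) :
    gprod mul (gprod mul univ {mul x α s}) univ ⊆ gprod mul (gprod mul univ {x}) univ := by
  rintro _ ⟨_, ⟨c, -, δ, _, rfl, rfl⟩, β, b, -, rfl⟩
  rw [← assoc, assoc]
  exact mul_mem_gprod mul (mul_mem_gprod mul (mem_univ c) δ (mem_singleton _)) α (mem_univ _)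

theorem isTwoSidedIdeal_setOf_gprod_gprod_subset
    (assoc : ∀ (e f g : T) (α β : G), mul (mul e α f) β g = mul e α (mul f β g))
    {S : Set T} {e : T} (he : gprod mul (gprod mul univ {e}) univ ⊆ S) :
    IsTwoSidedIdeal mul {x | gprod mul (gprod mul univ {x}) univ ⊆ S} := by
  refine ⟨⟨⟨e, he⟩, ?_⟩, ⟨⟨e, he⟩, ?_⟩⟩
  · rintro _ ⟨t, -, α, x, hx, rfl⟩
    exact (gprod_gprod_mul_left_subset assoc t α x).trans hx
  · rintro _ ⟨x, hx, α, s, -, rfl⟩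
    exact (gprod_gprod_mul_right_subset assoc x α s).trans hx

theorem IsTwoSidedIdeal.gprod_gprod_subset
    (assoc : ∀ (e f g : T) (α β : G), mul (mul e α f) β g = mul e α (mul f β g))
    {B : Set T} (hB : IsTwoSidedIdeal mul B) {e : T} (he : e ∈ B) :
    gprod mul (gprod mul univ {e}) univ ⊆ B := by
  rintro _ ⟨_, ⟨t, -, α, _, rfl, rfl⟩, β, s, -, rfl⟩
  rw [assoc]
  exact hB.1.2 (mul_mem_gprod mul (mem_univ t) α (hB.2.2 (mul_mem_gprod mul he β (mem_univ s))))

theorem exists_mem_gprod_gprod_of_gprod_univ_univ_eq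
    (hTT : gprod mul univ univ = (univ : Set T)) (x : T) :
    ∃ d, x ∈ gprod mul (gprod mul univ {d}) univ := by
  obtain ⟨a, -, α, b, -, rfl⟩ : x ∈ gprod mul univ univ := hTT.ge (mem_univ x)
  obtain ⟨c, -, β, d, -, rfl⟩ : a ∈ gprod mul univ univ := hTT.ge (mem_univ a)
  exact ⟨d, mul_mem_gprod mul (mul_mem_gprod mul (mem_univ c) β (mem_singleton _)) α (mem_univ b)⟩

theorem gprod_univ_univ_ne_singleton {z x : T} (hx : x ≠ z)
    (hxT : gprod mul (gprod mul univ {x}) univ = univ) :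
    gprod mul univ univ ≠ {z} := fun hTT => hx <| by
  rw [← mem_singleton_iff, ← hTT]
  exact gprod_mono mul (subset_univ _) subset_rfl (hxT.ge (mem_univ x))

theorem IsZeroSimple.gprod_univ_univ_eq [Nonempty G]
    (assoc : ∀ (e f g : T) (α β : G), mul (mul e α f) β g = mul e α (mul f β g))
    {z : T} (h : IsZeroSimple mul z) : gprod mul univ univ = univ := by
  have : Nonempty T := ⟨z⟩
  exact (h.2 _ ((isLeftIdeal_univ mul).isTwoSidedIdeal_gprod_univ assoc)).resolve_left h.1

theorem IsZeroSimple.gprod_gprod_eq_univ [Nonempty G]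
    (assoc : ∀ (e f g : T) (α β : G), mul (mul e α f) β g = mul e α (mul f β g))
    {z : T} (h : IsZeroSimple mul z) {e : T} (he : e ≠ z) :
    gprod mul (gprod mul univ {e}) univ = univ := by
  refine (h.2 _ ((isLeftIdeal_gprod_univ_singleton assoc e).isTwoSidedIdeal_gprod_univ
    assoc)).resolve_left fun h0 => he ?_
  set J : Set T := {x | gprod mul (gprod mul univ {x}) univ ⊆ {z}}
  have heJ : e ∈ J := h0.subset
  rcases h.2 J (isTwoSidedIdeal_setOf_gprod_gprod_subset assoc heJ) with hJ | hJ
  · exact hJ.subset heJ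
  · obtain ⟨d, hd⟩ := exists_mem_gprod_gprod_of_gprod_univ_univ_eq (h.gprod_univ_univ_eq assoc) e
    exact (hJ.ge (mem_univ d) : d ∈ J) hd

theorem IsTwoSidedIdeal.eq_univ_of_mem
    (assoc : ∀ (e f g : T) (α β : G), mul (mul e α f) β g = mul e α (mul f β g))
    {B : Set T} (hB : IsTwoSidedIdeal mul B) {e : T} (he : e ∈ B)
    (heT : gprod mul (gprod mul univ {e}) univ = univ) : B = univ :=
  eq_univ_of_univ_subset (heT ▸ hB.gprod_gprod_subset assoc he)

theorem isZeroSimple_of_forall_gprod_gprod_eq_univ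
    (assoc : ∀ (e f g : T) (α β : G), mul (mul e α f) β g = mul e α (mul f β g))
    {z : T} (hT : ∃ x : T, x ≠ z)
    (h : ∀ e : T, e ≠ z → gprod mul (gprod mul univ {e}) univ = univ) :
    IsZeroSimple mul z := by
  obtain ⟨x, hx⟩ := hT
  refine ⟨gprod_univ_univ_ne_singleton hx (h x hx), fun B hB => or_iff_not_imp_left.mpr ?_⟩
  intro hBz
  obtain ⟨e, heB, he⟩ : ∃ e ∈ B, e ≠ z := by
    by_contra! hB0
    exact hBz (eq_singleton_iff_nonempty_unique_mem.mpr ⟨hB.1.1, hB0⟩)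
  exact hB.eq_univ_of_mem assoc heB (h e he)

end GammaSemigroup

theorem zeroSimple_iff_TGeGT_eq_univ_general {T G : Type*} [Nonempty G]
    (mul : T → G → T → T)
    (assoc : ∀ (e f g : T) (α β : G), mul (mul e α f) β g = mul e α (mul f β g))
    (z : T) (hT : ∃ x : T, x ≠ z) :
    IsZeroSimple mul z ↔
      ∀ e : T, e ≠ z →
        gprod mul (gprod mul Set.univ {e}) Set.univ = Set.univ := by
  exact ⟨fun h e he => h.gprod_gprod_eq_univ assoc he,
    isZeroSimple_of_forall_gprod_gprod_eq_univ assoc hT⟩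

theorem zeroSimple_iff_TGeGT_eq_univ {T G : Type*} [Nonempty T] [Nonempty G]
    (mul : T → G → T → T)
    (assoc : ∀ (e f g : T) (α β : G), mul (mul e α f) β g = mul e α (mul f β g))
    (z : T) (hz : IsZero mul z) (hT : ∃ x : T, x ≠ z) :
    IsZeroSimple mul z ↔
      ∀ e : T, e ≠ z →
        gprod mul (gprod mul Set.univ {e}) Set.univ = Set.univ :=
  zeroSimple_iff_TGeGT_eq_univ_general mul assoc z hT
end

section
/- Let (T, Γ) be a Γ-semigroup and let H be a least Γ-left ideal of T (a Γ-left ideal such that every Γ-left ideal of T contained in H equals H). Then for any e ∈ Γ and f ∈ T, the set Hef = {hef : h ∈ H} is a least Γ-left ideal of T. -/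
section RightTranslate

variable {T G : Type*} {mul : T → G → T → T}
  (assoc : ∀ (e f g : T) (α β : G), mul (mul e α f) β g = mul e α (mul f β g))
include assoc

theorem IsLeftIdeal.mul_right {H : Set T} (hH : IsLeftIdeal mul H) (e : G) (f : T) :
    IsLeftIdeal mul {x | ∃ h ∈ H, x = mul h e f} := by
  obtain ⟨⟨h, hh⟩, hHclosed⟩ := hH
  refine ⟨⟨mul h e f, h, hh, rfl⟩, ?_⟩
  rintro x ⟨a, -, γ, b, ⟨h, hh, rfl⟩, rfl⟩
  exact ⟨mul a γ h, hHclosed ⟨a, trivial, γ, h, hh, rfl⟩, (assoc a h f γ e).symm⟩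

theorem IsLeftIdeal.sep_mul_right_mem {H B : Set T} (hH : IsLeftIdeal mul H)
    (hB : IsLeftIdeal mul B) {e : G} {f : T} (hBH : B ⊆ {x | ∃ h ∈ H, x = mul h e f}) :
    IsLeftIdeal mul {h ∈ H | mul h e f ∈ B} := by
  obtain ⟨⟨b, hb⟩, hBclosed⟩ := hB
  obtain ⟨h, hh, rfl⟩ := hBH hb
  refine ⟨⟨h, hh, hb⟩, ?_⟩
  rintro x ⟨a, -, γ, c, ⟨hcH, hcB⟩, rfl⟩
  refine ⟨hH.2 ⟨a, trivial, γ, c, hcH, rfl⟩, ?_⟩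
  rw [assoc]
  exact hBclosed ⟨a, trivial, γ, mul c e f, hcB, rfl⟩

end RightTranslate

theorem leastLeftIdeal_mul_general {T G : Type*}
    (mul : T → G → T → T)
    (assoc : ∀ (e f g : T) (α β : G), mul (mul e α f) β g = mul e α (mul f β g))
    (H : Set T) (hH : IsLeastLeftIdeal mul H) (e : G) (f : T) :
    IsLeastLeftIdeal mul {x | ∃ h ∈ H, x = mul h e f} := by
  refine ⟨hH.1.mul_right assoc e f, fun B hB hBH => hBH.antisymm ?_⟩
  -- Minimality of H applies to the part of H that `· e f` sends into B.
  have hsep : {h ∈ H | mul h e f ∈ B} = H :=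
    hH.2 _ (hH.1.sep_mul_right_mem assoc hB hBH) (Set.sep_subset _ _)
  rintro x ⟨h, hh, rfl⟩
  exact (hsep.symm ▸ hh : h ∈ {h ∈ H | mul h e f ∈ B}).2

theorem leastLeftIdeal_mul {T G : Type*} [Nonempty T] [Nonempty G]
    (mul : T → G → T → T)
    (assoc : ∀ (e f g : T) (α β : G), mul (mul e α f) β g = mul e α (mul f β g))
    (H : Set T) (hH : IsLeastLeftIdeal mul H) (e : G) (f : T) :
    IsLeastLeftIdeal mul {x | ∃ h ∈ H, x = mul h e f} :=
  leastLeftIdeal_mul_general mul assoc H hH e f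
end

section
/- Let (T, Γ) be a Γ-semigroup with zero 0, let H be a 0-least Γ-left ideal of T, and let e ∈ Γ, f ∈ T. Then the set Hef = {hef : h ∈ H} is either {0} or a 0-least Γ-left ideal of T. -/
/-! Right multiplication `x ↦ xαf` commutes with left multiplication by associativity, so it maps
Γ-left ideals to Γ-left ideals and pulls them back (inside `H`) to Γ-left ideals. A Γ-left ideal
`B ⊆ Hef` is the image of its pull-back `H ∩ (·ef)⁻¹' B`, which by minimality of `H` is `{0}`
or `H`; so `B` is `{0}` or `Hef`. -/

section LeftIdeal

variable {T G : Type*} {mul : T → G → T → T}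

theorem IsLeftIdeal.zero_mem [Nonempty G] {z : T} (hz : IsZero mul z) {B : Set T}
    (hB : IsLeftIdeal mul B) : z ∈ B := by
  obtain ⟨b, hb⟩ := hB.1
  obtain ⟨α⟩ := ‹Nonempty G›
  simpa only [(hz b α).2] using hB.2 ⟨z, Set.mem_univ _, α, b, hb, rfl⟩

theorem IsLeftIdeal.image_mul_right
    (assoc : ∀ (e f g : T) (α β : G), mul (mul e α f) β g = mul e α (mul f β g))
    {H : Set T} (hH : IsLeftIdeal mul H) (α : G) (f : T) :
    IsLeftIdeal mul ((fun h => mul h α f) '' H) := by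
  refine ⟨hH.1.image _, ?_⟩
  rintro x ⟨t, -, β, -, ⟨h, hh, rfl⟩, rfl⟩
  exact ⟨mul t β h, hH.2 ⟨t, Set.mem_univ _, β, h, hh, rfl⟩, assoc t h f β α⟩

theorem IsLeftIdeal.inter_preimage_mul_right
    (assoc : ∀ (e f g : T) (α β : G), mul (mul e α f) β g = mul e α (mul f β g))
    {z : T} (hz : IsZero mul z) {H B : Set T} (hH : IsLeftIdeal mul H) (hB : IsLeftIdeal mul B)
    (α : G) (f : T) :
    IsLeftIdeal mul (H ∩ (fun h => mul h α f) ⁻¹' B) := by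
  have : Nonempty G := ⟨α⟩
  refine ⟨⟨z, hH.zero_mem hz, ?_⟩, ?_⟩
  · simpa only [Set.mem_preimage, (hz f α).2] using hB.zero_mem hz
  rintro x ⟨t, -, β, h, ⟨hhH, hhB⟩, rfl⟩
  refine ⟨hH.2 ⟨t, Set.mem_univ _, β, h, hhH, rfl⟩, ?_⟩
  simpa only [Set.mem_preimage, assoc] using hB.2 ⟨t, Set.mem_univ _, β, _, hhB, rfl⟩

end LeftIdeal

theorem zeroLeastLeftIdeal_mul_general {T G : Type*}
    (mul : T → G → T → T)
    (assoc : ∀ (e f g : T) (α β : G), mul (mul e α f) β g = mul e α (mul f β g))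
    (z : T) (hz : IsZero mul z)
    (H : Set T) (hH : IsZeroLeastLeftIdeal mul z H) (e : G) (f : T) :
    {x | ∃ h ∈ H, x = mul h e f} = {z} ∨
      IsZeroLeastLeftIdeal mul z {x | ∃ h ∈ H, x = mul h e f} := by
  have hK : {x | ∃ h ∈ H, x = mul h e f} = (fun h => mul h e f) '' H := by
    ext
    simp only [Set.mem_ofPred_eq, Set.mem_image, eq_comm]
  rw [hK]
  obtain ⟨hHideal, -, hHmin⟩ := hH
  refine or_iff_not_imp_left.2 fun hKz =>
    ⟨hHideal.image_mul_right assoc e f, hKz, fun B hB hBK => ?_⟩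
  have hB_image : B = (fun h => mul h e f) '' (H ∩ (fun h => mul h e f) ⁻¹' B) := by
    rw [Set.image_inter_preimage, Set.inter_eq_right.2 hBK]
  rcases hHmin _ (hHideal.inter_preimage_mul_right assoc hz hB e f) Set.inter_subset_left
    with hA | hA
  · left
    rw [hB_image, hA, Set.image_singleton, (hz f e).2]
  · right
    rw [hB_image, hA]

theorem zeroLeastLeftIdeal_mul {T G : Type*} [Nonempty T] [Nonempty G]
    (mul : T → G → T → T)
    (assoc : ∀ (e f g : T) (α β : G), mul (mul e α f) β g = mul e α (mul f β g))
    (z : T) (hz : IsZero mul z)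
    (H : Set T) (hH : IsZeroLeastLeftIdeal mul z H) (e : G) (f : T) :
    {x | ∃ h ∈ H, x = mul h e f} = {z} ∨
      IsZeroLeastLeftIdeal mul z {x | ∃ h ∈ H, x = mul h e f} :=
  zeroLeastLeftIdeal_mul_general mul assoc z hz H hH e f
end

section
/- Let (T, Γ) be a Γ-semigroup with zero 0 and let H be a 0-least Γ-left ideal of T. Then H \ {0} is an L-class of T: for every e ∈ H with e ≠ 0, the set {f ∈ T : f L e} equals H \ {0}. -/
/-! For `x ∈ H` with `x ≠ 0`, the principal left ideal `{x} ∪ TΓx` is a Γ-left ideal inside `H`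
containing `x ≠ 0`, so by 0-minimality it is all of `H`. Hence all nonzero elements of `H`
generate the same principal left ideal, whereas `0` generates only `{0}`. -/

def leftPrincipal {T G : Type*} (mul : T → G → T → T) (x : T) : Set T :=
  insert x (gprod mul Set.univ {x})

section LeftPrincipal

variable {T G : Type*} {mul : T → G → T → T}

theorem lRel_iff {e f : T} : LRel mul e f ↔ leftPrincipal mul e = leftPrincipal mul f :=
  Iff.rfl

theorem mem_leftPrincipal_self (x : T) : x ∈ leftPrincipal mul x :=
  Set.mem_insert x _

theorem isLeftIdeal_leftPrincipal
    (assoc : ∀ (e f g : T) (α β : G), mul (mul e α f) β g = mul e α (mul f β g)) (x : T) :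
    IsLeftIdeal mul (leftPrincipal mul x) := by
  refine ⟨⟨x, mem_leftPrincipal_self x⟩, ?_⟩
  rintro _ ⟨t, -, α, y, hy | ⟨s, -, β, y, hy, rfl⟩, rfl⟩
  · exact Or.inr ⟨t, trivial, α, x, rfl, by rw [hy]⟩
  · rw [Set.mem_singleton_iff.1 hy]
    exact Or.inr ⟨mul t α s, trivial, β, x, rfl, (assoc t s x α β).symm⟩

theorem IsLeftIdeal.leftPrincipal_subset {B : Set T} (hB : IsLeftIdeal mul B) {x : T}
    (hx : x ∈ B) : leftPrincipal mul x ⊆ B := by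
  rintro _ (rfl | ⟨t, -, α, y, hy, rfl⟩)
  · exact hx
  · exact hB.2 ⟨t, trivial, α, y, Set.mem_singleton_iff.1 hy ▸ hx, rfl⟩

theorem IsZero.leftPrincipal_eq {z : T} (hz : IsZero mul z) : leftPrincipal mul z = {z} := by
  refine Set.Subset.antisymm ?_ (Set.singleton_subset_iff.2 (mem_leftPrincipal_self z))
  rintro _ (rfl | ⟨t, -, α, _, rfl, rfl⟩)
  · rfl
  · exact (hz t α).1

theorem IsZeroLeastLeftIdeal.leftPrincipal_eq
    (assoc : ∀ (e f g : T) (α β : G), mul (mul e α f) β g = mul e α (mul f β g))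
    {z : T} {H : Set T} (hH : IsZeroLeastLeftIdeal mul z H) {x : T} (hx : x ∈ H)
    (hxz : x ≠ z) : leftPrincipal mul x = H := by
  refine (hH.2.2 _ (isLeftIdeal_leftPrincipal assoc x) (hH.1.leftPrincipal_subset hx)).resolve_left
    fun h => hxz (Set.mem_singleton_iff.1 (h ▸ mem_leftPrincipal_self x))

end LeftPrincipal

theorem zeroLeastLeftIdeal_sdiff_zero_is_Lclass_general {T G : Type*}
    (mul : T → G → T → T)
    (assoc : ∀ (e f g : T) (α β : G), mul (mul e α f) β g = mul e α (mul f β g))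
    (z : T) (hz : IsZero mul z)
    (H : Set T) (hH : IsZeroLeastLeftIdeal mul z H) :
    ∀ e ∈ H, e ≠ z → {f : T | LRel mul f e} = H \ {z} := by
  intro e he hez
  have hLe : leftPrincipal mul e = H := hH.leftPrincipal_eq assoc he hez
  ext f
  constructor
  · intro (hfe : LRel mul f e)
    have hLf : leftPrincipal mul f = H := hLe ▸ lRel_iff.1 hfe
    refine ⟨hLf ▸ mem_leftPrincipal_self f, fun hfz : f = z => hez ?_⟩
    have hLe_zero : leftPrincipal mul e = {z} := by
      rw [← lRel_iff.1 hfe, hfz, hz.leftPrincipal_eq]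
    exact Set.mem_singleton_iff.1 (hLe_zero ▸ mem_leftPrincipal_self e)
  · rintro ⟨hf, hfz⟩
    exact lRel_iff.2 ((hH.leftPrincipal_eq assoc hf hfz).trans hLe.symm)

theorem zeroLeastLeftIdeal_sdiff_zero_is_Lclass {T G : Type*} [Nonempty T] [Nonempty G]
    (mul : T → G → T → T)
    (assoc : ∀ (e f g : T) (α β : G), mul (mul e α f) β g = mul e α (mul f β g))
    (z : T) (hz : IsZero mul z)
    (H : Set T) (hH : IsZeroLeastLeftIdeal mul z H) :
    ∀ e ∈ H, e ≠ z → {f : T | LRel mul f e} = H \ {z} :=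
  zeroLeastLeftIdeal_sdiff_zero_is_Lclass_general mul assoc z hz H hH
end

section
/- Let (T, Γ) be a completely 0-simple Γ-semigroup. Then the nonzero elements of T form a single D-class (i.e., e D f for all nonzero e, f ∈ T), and every nonzero element of T is regular (for every nonzero a ∈ T there exist x ∈ T and α, β ∈ Γ with aαxβa = a). -/
/-!
In a 0-simple Γ-semigroup every element is a multiple `(uαa)βv` of any nonzero `a`. Fix a
primitive idempotent `e` with `eλe = e`. If `A, B ∈ eλTλe` satisfy `AλB = e`, then `BλA` is a
nonzero idempotent below `e`, so `BλA = e`. Factoring `e` through a nonzero `(uαa)βv` and `a`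
through `e` and applying this gives `a ∈ aβvΓTΓuαa`. This yields regularity, and for suitable
`u` or `v` it yields `a ∈ TΓ(wσa)` and `a ∈ (aσw)ΓT`; these cancellations give the relations
`L` and `R` that link any two nonzero elements.
-/

open Set

abbrev GammaAssociative {T G : Type*} (mul : T → G → T → T) : Prop :=
  ∀ (e f g : T) (α β : G), mul (mul e α f) β g = mul e α (mul f β g)

section

variable {T G : Type*} {mul : T → G → T → T} {z : T}

theorem IsZeroSimple.gprod_univ_univ_eq_univ [Nonempty G] (hzs : IsZeroSimple mul z) :
    gprod mul univ univ = univ := by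
  obtain ⟨γ⟩ := ‹Nonempty G›
  have hne : (gprod mul univ univ).Nonempty := ⟨mul z γ z, z, trivial, γ, z, trivial, rfl⟩
  have hsub : ∀ A B : Set T, gprod mul A B ⊆ gprod mul univ univ :=
    fun _ _ _ ⟨a, _, γ, b, _, hx⟩ => ⟨a, trivial, γ, b, trivial, hx⟩
  exact (hzs.2 _ ⟨⟨hne, hsub _ _⟩, hne, hsub _ _⟩).resolve_left hzs.1

theorem IsZeroSimple.exists_mul_mul_ne [Nonempty G] (assoc : GammaAssociative mul)
    (hz : IsZero mul z) (hzs : IsZeroSimple mul z) {a : T} (ha : a ≠ z) :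
    ∃ (u v : T) (α β : G), mul (mul u α a) β v ≠ z := by
  -- Otherwise the elements `b` with `TΓbΓT = {0}` form a nonzero ideal, hence all of `T`, and
  -- then `TΓT = (TΓT)ΓT = {0}`.
  by_contra! h
  set K : Set T := {b | ∀ (u v : T) (α β : G), mul (mul u α b) β v = z}
  have hzK : z ∈ K := fun u v α β => by rw [(hz u α).1, (hz v β).2]
  have hK : IsTwoSidedIdeal mul K := by
    refine ⟨⟨⟨z, hzK⟩, ?_⟩, ⟨z, hzK⟩, ?_⟩
    · rintro _ ⟨t, -, γ, b, hb, rfl⟩ u v α β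
      rw [← assoc, hb]
    · rintro _ ⟨b, hb, γ, t, -, rfl⟩ u v α β
      rw [← assoc, assoc _ t, hb]
  have hKuniv : K = univ := (hzs.2 K hK).resolve_left fun hKz =>
    ha (mem_singleton_iff.1 (hKz ▸ (h : a ∈ K)))
  have hTT := hzs.gprod_univ_univ_eq_univ
  refine hzs.1 (eq_singleton_iff_unique_mem.2 ⟨eq_univ_iff_forall.1 hTT z, ?_⟩)
  rintro _ ⟨p, -, γ, q, -, rfl⟩
  obtain ⟨x, -, δ, y, -, rfl⟩ : p ∈ gprod mul univ univ := eq_univ_iff_forall.1 hTT p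
  exact (eq_univ_iff_forall.1 hKuniv y : y ∈ K) x q δ γ

theorem IsZeroSimple.exists_eq_mul_mul [Nonempty G] (assoc : GammaAssociative mul)
    (hz : IsZero mul z) (hzs : IsZeroSimple mul z) {a : T} (ha : a ≠ z) (t : T) :
    ∃ (u v : T) (α β : G), t = mul (mul u α a) β v := by
  obtain ⟨u, v, α, β, hne⟩ := hzs.exists_mul_mul_ne assoc hz ha
  set J := gprod mul (gprod mul univ {a}) univ
  have hmem : ∀ (u v : T) (α β : G), mul (mul u α a) β v ∈ J :=
    fun u v α β => ⟨_, ⟨u, trivial, α, a, rfl, rfl⟩, β, v, trivial, rfl⟩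
  have hJ : IsTwoSidedIdeal mul J := by
    refine ⟨⟨⟨_, hmem u v α β⟩, ?_⟩, ⟨_, hmem u v α β⟩, ?_⟩
    · rintro _ ⟨t, -, γ, _, ⟨_, ⟨x, -, α, _, rfl, rfl⟩, β, y, -, rfl⟩, rfl⟩
      simpa only [assoc] using hmem (mul t γ x) y α β
    · rintro _ ⟨_, ⟨_, ⟨x, -, α, _, rfl, rfl⟩, β, y, -, rfl⟩, γ, t, -, rfl⟩
      simpa only [assoc] using hmem x (mul y γ t) α β
  have hJuniv : J = univ := (hzs.2 J hJ).resolve_left fun hJz =>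
    hne (mem_singleton_iff.1 (hJz ▸ hmem u v α β))
  obtain ⟨_, ⟨u, -, α, _, rfl, rfl⟩, β, v, -, rfl⟩ : t ∈ J := eq_univ_iff_forall.1 hJuniv t
  exact ⟨u, v, α, β, rfl⟩

theorem IsPrimitiveIdempotent.mul_eq_of_mul_eq (assoc : GammaAssociative mul)
    (hz : IsZero mul z) {e A B : T} {lam : G} (he : IsPrimitiveIdempotent mul z e)
    (hlam : mul e lam e = e) (hA : mul A lam e = A) (heB : mul e lam B = B)
    (hBe : mul B lam e = B) (hAB : mul A lam B = e) : mul B lam A = e := by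
  refine he.2.2 _ ?_ ⟨lam, ?_⟩ ⟨lam, lam, ?_, ?_⟩
  · intro hBA
    apply he.1
    calc e = mul (mul A lam B) lam (mul A lam B) := by rw [hAB, hlam]
      _ = mul (mul A lam (mul B lam A)) lam B := by simp only [assoc]
      _ = z := by rw [hBA, (hz A lam).1, (hz B lam).2]
  · calc mul (mul B lam A) lam (mul B lam A) = mul (mul B lam (mul A lam B)) lam A := by
          simp only [assoc]
      _ = mul B lam A := by rw [hAB, hBe]
  · rw [assoc, hA]
  · rw [← assoc, heB]

theorem IsPrimitiveIdempotent.mul_mul_eq_self (assoc : GammaAssociative mul)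
    (hz : IsZero mul z) {e a s t u v : T} {lam γ δ α β : G}
    (he : IsPrimitiveIdempotent mul z e) (hlam : mul e lam e = e)
    (ha : a = mul (mul s γ e) δ t) (hea : e = mul (mul u α a) β v) :
    mul (mul a β (mul (mul v lam e) lam u)) α a = a := by
  have hee : ∀ (σ : G) (w : T), mul e lam (mul e σ w) = mul e σ w := fun σ w => by
    rw [← assoc, hlam]
  set A := mul (mul (mul e lam u) α s) γ e with hA
  set B := mul (mul e δ t) β (mul v lam e) with hB
  have hAB : mul A lam B = e :=
    calc mul A lam B = mul (mul e lam (mul (mul u α a) β v)) lam e := by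
          rw [ha]; simp only [hA, hB, assoc, hee]
      _ = e := by rw [← hea, hlam, hlam]
  have hBA : mul B lam A = e := he.mul_eq_of_mul_eq assoc hz hlam
    (by simp only [hA, assoc, hlam]) (by simp only [hB, assoc, hee])
    (by simp only [hB, assoc, hlam]) hAB
  calc mul (mul a β (mul (mul v lam e) lam u)) α a = mul (mul s γ (mul B lam A)) δ t := by
        rw [ha]; simp only [hA, hB, assoc, hee]
    _ = a := by rw [hBA, ha]

theorem IsCompletelyZeroSimple.nonempty_gamma (hcs : IsCompletelyZeroSimple mul z) :
    Nonempty G :=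
  let ⟨_, _, _, ⟨lam, _⟩, _⟩ := hcs
  ⟨lam⟩

theorem IsCompletelyZeroSimple.exists_mul_mul_eq_self_of_mul_mul_ne
    (assoc : GammaAssociative mul) (hz : IsZero mul z) (hcs : IsCompletelyZeroSimple mul z)
    {a u v : T} {α β : G} (h : mul (mul u α a) β v ≠ z) :
    ∃ (y : T) (μ ν : G), mul (mul a β (mul (mul v μ y) ν u)) α a = a := by
  have := hcs.nonempty_gamma
  obtain ⟨hzs, e, he⟩ := hcs
  obtain ⟨lam, hlam⟩ := he.2.1
  obtain ⟨p, q, μ, ν, hep⟩ := hzs.exists_eq_mul_mul assoc hz h e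
  obtain ⟨s, t, γ, δ, ha⟩ := hzs.exists_eq_mul_mul assoc hz he.1 a
  have hea : e = mul (mul (mul p μ u) α a) β (mul v ν q) := by rw [hep]; simp only [assoc]
  refine ⟨mul (mul q lam e) lam p, ν, μ, ?_⟩
  calc _ = mul (mul a β (mul (mul (mul v ν q) lam e) lam (mul p μ u))) α a := by
        simp only [assoc]
    _ = a := he.mul_mul_eq_self assoc hz hlam ha hea

theorem IsCompletelyZeroSimple.exists_mul_mul_eq_self (assoc : GammaAssociative mul)
    (hz : IsZero mul z) (hcs : IsCompletelyZeroSimple mul z) {a : T} (ha : a ≠ z) :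
    ∃ (x : T) (α β : G), mul (mul a α x) β a = a := by
  have := hcs.nonempty_gamma
  obtain ⟨u, v, α, β, h⟩ := hcs.1.exists_mul_mul_ne assoc hz ha
  obtain ⟨y, μ, ν, hy⟩ := hcs.exists_mul_mul_eq_self_of_mul_mul_ne assoc hz h
  exact ⟨_, β, α, hy⟩

theorem IsCompletelyZeroSimple.mem_gprod_univ_singleton_of_mul_ne
    (assoc : GammaAssociative mul) (hz : IsZero mul z) (hcs : IsCompletelyZeroSimple mul z)
    {a w : T} {σ : G} (h : mul w σ a ≠ z) : a ∈ gprod mul univ {mul w σ a} := by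
  have := hcs.nonempty_gamma
  obtain ⟨p, q, μ, ν, hpq⟩ := hcs.1.exists_mul_mul_ne assoc hz h
  have hq : mul (mul w σ a) ν q ≠ z := fun h0 => hpq (by rw [assoc, h0, (hz p μ).1])
  obtain ⟨y, μ', ν', hy⟩ := hcs.exists_mul_mul_eq_self_of_mul_mul_ne assoc hz hq
  refine ⟨mul a ν (mul q μ' y), trivial, ν', _, rfl, ?_⟩
  calc a = _ := hy.symm
    _ = _ := by simp only [assoc]

theorem IsCompletelyZeroSimple.mem_gprod_singleton_univ_of_mul_ne
    (assoc : GammaAssociative mul) (hz : IsZero mul z) (hcs : IsCompletelyZeroSimple mul z)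
    {a w : T} {σ : G} (h : mul a σ w ≠ z) : a ∈ gprod mul {mul a σ w} univ := by
  have := hcs.nonempty_gamma
  obtain ⟨p, q, μ, ν, hpq⟩ := hcs.1.exists_mul_mul_ne assoc hz h
  have hp : mul (mul p μ a) σ w ≠ z := fun h0 => hpq (by rw [← assoc, h0, (hz q ν).2])
  obtain ⟨y, μ', ν', hy⟩ := hcs.exists_mul_mul_eq_self_of_mul_mul_ne assoc hz hp
  refine ⟨_, rfl, μ', mul (mul y ν' p) μ a, trivial, ?_⟩
  calc a = _ := hy.symm
    _ = _ := by simp only [assoc]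

theorem insert_gprod_univ_singleton_subset (assoc : GammaAssociative mul) {a c : T}
    (h : a ∈ gprod mul univ {c}) :
    insert a (gprod mul univ {a}) ⊆ insert c (gprod mul univ {c}) := by
  obtain ⟨x, -, γ, _, rfl, rfl⟩ := h
  rintro _ (rfl | ⟨y, -, δ, _, rfl, rfl⟩)
  · exact Or.inr ⟨x, trivial, γ, _, rfl, rfl⟩
  · exact Or.inr ⟨mul y δ x, trivial, γ, _, rfl, (assoc _ _ _ δ γ).symm⟩

theorem insert_gprod_singleton_univ_subset (assoc : GammaAssociative mul) {a c : T}
    (h : a ∈ gprod mul {c} univ) :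
    insert a (gprod mul {a} univ) ⊆ insert c (gprod mul {c} univ) := by
  obtain ⟨_, rfl, γ, x, -, rfl⟩ := h
  rintro _ (rfl | ⟨_, rfl, δ, y, -, rfl⟩)
  · exact Or.inr ⟨_, rfl, γ, x, trivial, rfl⟩
  · exact Or.inr ⟨_, rfl, γ, mul x δ y, trivial, assoc _ _ _ γ δ⟩

theorem lRel_of_mem (assoc : GammaAssociative mul) {a c : T} (ha : a ∈ gprod mul univ {c})
    (hc : c ∈ gprod mul univ {a}) : LRel mul a c :=
  (insert_gprod_univ_singleton_subset assoc ha).antisymm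
    (insert_gprod_univ_singleton_subset assoc hc)

theorem rRel_of_mem (assoc : GammaAssociative mul) {a c : T} (ha : a ∈ gprod mul {c} univ)
    (hc : c ∈ gprod mul {a} univ) : RRel mul a c :=
  (insert_gprod_singleton_univ_subset assoc ha).antisymm
    (insert_gprod_singleton_univ_subset assoc hc)

end

theorem completelyZeroSimple_Dclass_and_regular_general {T G : Type*}
    (mul : T → G → T → T)
    (assoc : ∀ (e f g : T) (α β : G), mul (mul e α f) β g = mul e α (mul f β g))
    (z : T) (hz : IsZero mul z)
    (hcs : IsCompletelyZeroSimple mul z) :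
    (∀ e f : T, e ≠ z → f ≠ z → DRel mul e f) ∧
      (∀ a : T, a ≠ z → ∃ (x : T) (α β : G), mul (mul a α x) β a = a) := by
  refine ⟨fun a b ha hb => ?_, fun a ha => hcs.exists_mul_mul_eq_self assoc hz ha⟩
  have := hcs.nonempty_gamma
  obtain ⟨u, v, μ, δ, rfl⟩ := hcs.1.exists_eq_mul_mul assoc hz ha b
  have hc : mul u μ a ≠ z := fun h0 => hb (by rw [h0, (hz v δ).2])
  exact ⟨mul u μ a,
    lRel_of_mem assoc (hcs.mem_gprod_univ_singleton_of_mul_ne assoc hz hc)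
      ⟨u, trivial, μ, a, rfl, rfl⟩,
    rRel_of_mem assoc (hcs.mem_gprod_singleton_univ_of_mul_ne assoc hz hb)
      ⟨_, rfl, δ, v, trivial, rfl⟩⟩

theorem completelyZeroSimple_Dclass_and_regular {T G : Type*} [Nonempty T] [Nonempty G]
    (mul : T → G → T → T)
    (assoc : ∀ (e f g : T) (α β : G), mul (mul e α f) β g = mul e α (mul f β g))
    (z : T) (hz : IsZero mul z)
    (hcs : IsCompletelyZeroSimple mul z) :
    (∀ e f : T, e ≠ z → f ≠ z → DRel mul e f) ∧
      (∀ a : T, a ≠ z → ∃ (x : T) (α β : G), mul (mul a α x) β a = a) :=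
  completelyZeroSimple_Dclass_and_regular_general mul assoc z hz hcs
end

section
/- Let (T, Γ) be a completely 0-simple Γ-semigroup and let e be a primitive idempotent of T. Then H = TΓe is a 0-least Γ-left ideal of T and I = eΓT is a 0-least Γ-right ideal of T. -/
/-!
In a 0-simple Γ-semigroup every nonzero `a` satisfies TΓaΓT = T. For a primitive idempotent `e`
with `e p e = e`, this makes every nonzero `c` with `e p c = c = c p e` invertible relative to `e`:
writing `e = x p c p y` with `x`, `y` in the same corner, both `c p (y p x)` and `(y p x) p c` are
nonzero idempotents below `e`, hence equal to `e`. So a nonzero `b ∈ TΓe` satisfies `e ∈ TΓb`, and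
a Γ-left ideal inside TΓe other than {z} contains `e`, hence all of TΓe. The right-hand statement
is the left-hand one for the opposite multiplication `a γ b ↦ b γ a`.
-/

open Set

section

variable {T G : Type*} {mul : T → G → T → T}

def IsGammaSemigroup (mul : T → G → T → T) : Prop :=
  ∀ (a b c : T) (α β : G), mul (mul a α b) β c = mul a α (mul b β c)

theorem IsGammaSemigroup.assoc (hT : IsGammaSemigroup mul) (a b c : T) (α β : G) :
    mul (mul a α b) β c = mul a α (mul b β c) :=
  hT a b c α β

theorem mem_gprod_univ_singleton {a x : T} :
    x ∈ gprod mul univ {a} ↔ ∃ t γ, mul t γ a = x := by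
  simp [gprod, eq_comm]

theorem mem_gprod_gprod_univ_singleton_univ {a x : T} :
    x ∈ gprod mul (gprod mul univ {a}) univ ↔ ∃ s γ δ t, mul (mul s γ a) δ t = x := by
  simp [gprod, eq_comm]

theorem isTwoSidedIdeal_of_forall {B : Set T} (hne : B.Nonempty)
    (hleft : ∀ t γ b, b ∈ B → mul t γ b ∈ B) (hright : ∀ b γ t, b ∈ B → mul b γ t ∈ B) :
    IsTwoSidedIdeal mul B :=
  ⟨⟨hne, by rintro _ ⟨t, -, γ, b, hb, rfl⟩; exact hleft t γ b hb⟩,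
    ⟨hne, by rintro _ ⟨b, hb, γ, t, -, rfl⟩; exact hright b γ t hb⟩⟩

theorem IsZeroSimple.eq_univ_of_mem {z a : T} {B : Set T} (h0 : IsZeroSimple mul z)
    (hB : IsTwoSidedIdeal mul B) (ha : a ∈ B) (haz : a ≠ z) : B = univ :=
  (h0.2 B hB).resolve_left fun h => haz (by rw [h] at ha; exact ha)

theorem IsZeroSimple.gprod_univ_univ [Nonempty G] {z : T} (hT : IsGammaSemigroup mul)
    (h0 : IsZeroSimple mul z) : gprod mul univ univ = univ := by
  obtain ⟨γ⟩ := ‹Nonempty G›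
  have hne : (gprod mul univ univ).Nonempty := ⟨mul z γ z, z, trivial, γ, z, trivial, rfl⟩
  refine (h0.2 _ (isTwoSidedIdeal_of_forall hne ?_ ?_)).resolve_left h0.1
  · rintro t γ _ ⟨a, -, δ, b, -, rfl⟩
    exact ⟨_, trivial, δ, b, trivial, (hT.assoc t a b γ δ).symm⟩
  · rintro _ γ t ⟨a, -, δ, b, -, rfl⟩
    exact ⟨a, trivial, δ, _, trivial, hT.assoc a b t δ γ⟩

theorem IsZeroSimple.gprod_gprod_univ_singleton_univ [Nonempty G] {z a : T}
    (hT : IsGammaSemigroup mul) (hz : IsZero mul z) (h0 : IsZeroSimple mul z) (haz : a ≠ z) :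
    gprod mul (gprod mul univ {a}) univ = univ := by
  obtain ⟨γ⟩ := ‹Nonempty G›
  have hJ : IsTwoSidedIdeal mul (gprod mul (gprod mul univ {a}) univ) := by
    refine isTwoSidedIdeal_of_forall ⟨z, mem_gprod_gprod_univ_singleton_univ.2
      ⟨z, γ, γ, z, by rw [(hz a γ).2, (hz z γ).1]⟩⟩ ?_ ?_
    · intro t β x hx
      obtain ⟨s, γ, δ, u, rfl⟩ := mem_gprod_gprod_univ_singleton_univ.1 hx
      exact mem_gprod_gprod_univ_singleton_univ.2 ⟨mul t β s, γ, δ, u, by simp only [hT.assoc]⟩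
    · intro x β t hx
      obtain ⟨s, γ, δ, u, rfl⟩ := mem_gprod_gprod_univ_singleton_univ.1 hx
      exact mem_gprod_gprod_univ_singleton_univ.2
        ⟨s, γ, δ, mul u β t, (hT.assoc _ _ _ _ _).symm⟩
  refine (h0.2 _ hJ).resolve_left fun hJz => h0.1 ?_
  -- otherwise the ideal of all x with TΓxΓT = {z} contains a, so it is T and TΓT = TΓTΓT = {z}
  set K : Set T := {x | ∀ s γ δ t, mul (mul s γ x) δ t = z}
  have hK : IsTwoSidedIdeal mul K := by
    refine isTwoSidedIdeal_of_forall ⟨z, fun s γ δ t => by rw [(hz s γ).1, (hz t δ).2]⟩ ?_ ?_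
    · intro r β x hx s γ δ t
      rw [← hT.assoc, hx]
    · intro x β r hx s γ δ t
      rw [← hT.assoc s x r γ β, hT.assoc _ r t β δ, hx]
  have haK : a ∈ K := fun s γ δ t =>
    hJz.subset (mem_gprod_gprod_univ_singleton_univ.2 ⟨s, γ, δ, t, rfl⟩)
  have hKu := h0.eq_univ_of_mem hK haK haz
  have hTT := h0.gprod_univ_univ hT
  refine hTT.trans (eq_singleton_iff_unique_mem.2 ⟨trivial, fun t _ => ?_⟩)
  obtain ⟨u, -, δ, v, -, rfl⟩ := hTT.symm ▸ mem_univ t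
  obtain ⟨s, -, γ, x, -, rfl⟩ := hTT.symm ▸ mem_univ u
  exact (hKu.symm ▸ mem_univ x : x ∈ K) s γ δ v

theorem IsPrimitiveIdempotent.eq_of_corner {z e f : T} {p : G}
    (he : IsPrimitiveIdempotent mul z e) (hfz : f ≠ z) (hff : mul f p f = f)
    (hfe : mul f p e = f) (hef : mul e p f = f) : f = e :=
  he.2.2 f hfz ⟨p, hff⟩ ⟨p, p, hfe, hef⟩

theorem IsPrimitiveIdempotent.exists_inverse_of_factor {z e c x y : T} {p : G}
    (hT : IsGammaSemigroup mul) (hz : IsZero mul z) (he : IsPrimitiveIdempotent mul z e)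
    (hcz : c ≠ z) (hec : mul e p c = c) (hce : mul c p e = c)
    (hex : mul e p x = x) (hxe : mul x p e = x) (hey : mul e p y = y)
    (hxcy : mul x p (mul c p y) = e) :
    ∃ w, mul w p c = e ∧ mul c p w = e := by
  have hxf : mul x p (mul c p (mul y p x)) = x := by
    rw [← hT.assoc c, ← hT.assoc x, hxcy, hex]
  have hf : mul c p (mul y p x) = e := by
    refine he.eq_of_corner (p := p) (fun h => he.1 ?_) ?_ ?_ ?_
    · rw [← hxcy, ← hxf, h, (hz _ p).1, (hz _ p).2]
    · rw [hT.assoc c, hT.assoc y, hxf]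
    · rw [hT.assoc c, hT.assoc y, hxe]
    · rw [← hT.assoc e, hec]
  have hcg : mul c p (mul (mul y p x) p c) = c := by
    rw [← hT.assoc c, hf, hec]
  have hg : mul (mul y p x) p c = e := by
    refine he.eq_of_corner (p := p) (fun h => hcz ?_) ?_ ?_ ?_
    · rw [← hcg, h, (hz _ p).1]
    · rw [hT.assoc (mul y p x), hcg]
    · rw [hT.assoc (mul y p x), hce]
    · rw [← hT.assoc e, ← hT.assoc e, hey]
  exact ⟨_, hg, hf⟩

theorem IsZeroSimple.exists_inverse_of_corner {z e c : T} {p : G} (hT : IsGammaSemigroup mul)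
    (hz : IsZero mul z) (h0 : IsZeroSimple mul z) (he : IsPrimitiveIdempotent mul z e)
    (hep : mul e p e = e) (hcz : c ≠ z) (hec : mul e p c = c) (hce : mul c p e = c) :
    ∃ w, mul w p c = e ∧ mul c p w = e := by
  have : Nonempty G := ⟨p⟩
  obtain ⟨s, γ, δ, t, hst⟩ :=
    mem_gprod_gprod_univ_singleton_univ.1
      (h0.gprod_gprod_univ_singleton_univ hT hz hcz ▸ mem_univ e)
  refine he.exists_inverse_of_factor hT hz hcz hec hce (x := mul e p (mul s γ e))
    (y := mul e δ t) ?_ ?_ ?_ ?_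
  · rw [← hT.assoc, hep]
  · rw [hT.assoc, hT.assoc, hep]
  · rw [← hT.assoc, hep]
  · rw [← hT.assoc c e t, hce, hT.assoc e, hT.assoc s e, ← hT.assoc e c t, hec,
      ← hT.assoc s c t, hst, hep]

theorem IsZeroSimple.mem_gprod_univ_singleton_of_mem {z e b : T} (hT : IsGammaSemigroup mul)
    (hz : IsZero mul z) (h0 : IsZeroSimple mul z) (he : IsPrimitiveIdempotent mul z e)
    (hb : b ∈ gprod mul univ {e}) (hbz : b ≠ z) : e ∈ gprod mul univ {b} := by
  obtain ⟨p, hep⟩ := he.2.1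
  have : Nonempty G := ⟨p⟩
  obtain ⟨t, γ, rfl⟩ := mem_gprod_univ_singleton.1 hb
  obtain ⟨x, α, β, y, hxy⟩ :=
    mem_gprod_gprod_univ_singleton_univ.1
      (h0.gprod_gprod_univ_singleton_univ hT hz hbz ▸ mem_univ e)
  have hec : mul e p (mul (mul e p x) α (mul t γ e)) = mul (mul e p x) α (mul t γ e) := by
    rw [← hT.assoc e, ← hT.assoc e e, hep]
  have hce : mul (mul (mul e p x) α (mul t γ e)) p e = mul (mul e p x) α (mul t γ e) := by
    rw [hT.assoc _ (mul t γ e), hT.assoc t, hep]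
  have hcy : mul (mul (mul e p x) α (mul t γ e)) β y = e := by
    rw [hT.assoc e x, hT.assoc e, hxy, hep]
  have hcz : mul (mul e p x) α (mul t γ e) ≠ z := fun h => he.1 (by rw [← hcy, h, (hz y β).2])
  obtain ⟨w, hw, -⟩ := h0.exists_inverse_of_corner hT hz he hep hcz hec hce
  exact mem_gprod_univ_singleton.2 ⟨mul w p (mul e p x), α, by rw [hT.assoc, hw]⟩

theorem IsLeftIdeal.gprod_univ_singleton_subset {B : Set T} {b : T} (hB : IsLeftIdeal mul B)
    (hb : b ∈ B) : gprod mul univ {b} ⊆ B := by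
  intro x hx
  obtain ⟨t, γ, rfl⟩ := mem_gprod_univ_singleton.1 hx
  exact hB.2 ⟨t, trivial, γ, b, hb, rfl⟩

theorem IsZeroSimple.isZeroLeastLeftIdeal {z e : T} (hT : IsGammaSemigroup mul)
    (hz : IsZero mul z) (h0 : IsZeroSimple mul z) (he : IsPrimitiveIdempotent mul z e) :
    IsZeroLeastLeftIdeal mul z (gprod mul univ {e}) := by
  obtain ⟨p, hep⟩ := he.2.1
  have heH : e ∈ gprod mul univ {e} := mem_gprod_univ_singleton.2 ⟨e, p, hep⟩
  have hH : IsLeftIdeal mul (gprod mul univ {e}) := by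
    refine ⟨⟨e, heH⟩, ?_⟩
    rintro _ ⟨t, -, γ, x, hx, rfl⟩
    obtain ⟨s, δ, rfl⟩ := mem_gprod_univ_singleton.1 hx
    exact mem_gprod_univ_singleton.2 ⟨mul t γ s, δ, hT.assoc _ _ _ _ _⟩
  refine ⟨hH, fun h => he.1 (h ▸ heH : e ∈ ({z} : Set T)), fun B hB hBH => ?_⟩
  by_cases hBz : B ⊆ {z}
  · exact Or.inl (hB.1.subset_singleton_iff.1 hBz)
  obtain ⟨b, hbB, hbz⟩ := not_subset.1 hBz
  have heB : e ∈ B := hB.gprod_univ_singleton_subset hbB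
    (h0.mem_gprod_univ_singleton_of_mem hT hz he (hBH hbB) hbz)
  exact Or.inr (hBH.antisymm (hB.gprod_univ_singleton_subset heB))

def opMul (mul : T → G → T → T) : T → G → T → T := fun a γ b => mul b γ a

theorem gprod_opMul (A B : Set T) : gprod (opMul mul) A B = gprod mul B A := by
  ext x
  constructor <;> rintro ⟨a, ha, γ, b, hb, rfl⟩ <;> exact ⟨b, hb, γ, a, ha, rfl⟩

theorem IsGammaSemigroup.opMul (hT : IsGammaSemigroup mul) : IsGammaSemigroup (opMul mul) :=
  fun a b c α β => (hT c b a β α).symm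

theorem isLeftIdeal_opMul {B : Set T} : IsLeftIdeal (opMul mul) B ↔ IsRightIdeal mul B := by
  rw [IsLeftIdeal, IsRightIdeal, gprod_opMul]

theorem isRightIdeal_opMul {B : Set T} : IsRightIdeal (opMul mul) B ↔ IsLeftIdeal mul B := by
  rw [IsLeftIdeal, IsRightIdeal, gprod_opMul]

theorem isTwoSidedIdeal_opMul {B : Set T} :
    IsTwoSidedIdeal (opMul mul) B ↔ IsTwoSidedIdeal mul B := by
  rw [IsTwoSidedIdeal, IsTwoSidedIdeal, isLeftIdeal_opMul, isRightIdeal_opMul, and_comm]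

theorem isZero_opMul {z : T} : IsZero (opMul mul) z ↔ IsZero mul z :=
  forall₂_congr fun _ _ => and_comm

theorem isZeroSimple_opMul {z : T} : IsZeroSimple (opMul mul) z ↔ IsZeroSimple mul z := by
  simp only [IsZeroSimple, gprod_opMul, isTwoSidedIdeal_opMul]

theorem isPrimitiveIdempotent_opMul {z e : T} :
    IsPrimitiveIdempotent (opMul mul) z e ↔ IsPrimitiveIdempotent mul z e := by
  have hle : ∀ f, IdemLe (opMul mul) f e ↔ IdemLe mul f e := fun f =>
    ⟨fun ⟨x, y, h⟩ => ⟨y, x, h.symm⟩, fun ⟨x, y, h⟩ => ⟨y, x, h.symm⟩⟩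
  simp only [IsPrimitiveIdempotent, hle]
  rfl

theorem isZeroLeastLeftIdeal_opMul {z : T} {B : Set T} :
    IsZeroLeastLeftIdeal (opMul mul) z B ↔ IsZeroLeastRightIdeal mul z B := by
  simp only [IsZeroLeastLeftIdeal, IsZeroLeastRightIdeal, isLeftIdeal_opMul]

end

theorem primitiveIdempotent_gives_zeroLeast_ideals_general {T G : Type*}
    (mul : T → G → T → T)
    (assoc : ∀ (e f g : T) (α β : G), mul (mul e α f) β g = mul e α (mul f β g))
    (z : T) (hz : IsZero mul z)
    (hcs : IsCompletelyZeroSimple mul z)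
    (e : T) (he : IsPrimitiveIdempotent mul z e) :
    IsZeroLeastLeftIdeal mul z (gprod mul Set.univ {e}) ∧
      IsZeroLeastRightIdeal mul z (gprod mul {e} Set.univ) := by
  have hT : IsGammaSemigroup mul := assoc
  refine ⟨hcs.1.isZeroLeastLeftIdeal hT hz he, ?_⟩
  have := (isZeroSimple_opMul.2 hcs.1).isZeroLeastLeftIdeal hT.opMul (isZero_opMul.2 hz)
    (isPrimitiveIdempotent_opMul.2 he)
  rwa [gprod_opMul, isZeroLeastLeftIdeal_opMul] at this

theorem primitiveIdempotent_gives_zeroLeast_ideals {T G : Type*} [Nonempty T] [Nonempty G]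
    (mul : T → G → T → T)
    (assoc : ∀ (e f g : T) (α β : G), mul (mul e α f) β g = mul e α (mul f β g))
    (z : T) (hz : IsZero mul z)
    (hcs : IsCompletelyZeroSimple mul z)
    (e : T) (he : IsPrimitiveIdempotent mul z e) :
    IsZeroLeastLeftIdeal mul z (gprod mul Set.univ {e}) ∧
      IsZeroLeastRightIdeal mul z (gprod mul {e} Set.univ) :=
  primitiveIdempotent_gives_zeroLeast_ideals_general mul assoc z hz hcs e he
end
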